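/- Assume Δ‖a‖ ≥ 1 + ε₀ and a_τ < 0. Then aᵀg > 0 and τ_m < τ_cp, and on the set Ω = [−τ_Δ, τ_d] ∪ [τ_u, τ_Δ] the function ρ is minimized at τ*, where τ* = τ_u if τ_m < τ_cp ≤ τ_u; τ* = τ_cp if τ_u < τ_cp < τ_Δ; and τ* is whichever of −τ_Δ and τ_Δ gives the smaller value of ρ if τ_cp ≥ τ_Δ. That is, τ* ∈ Ω and ρ(τ*) ≤ ρ(τ) for every τ ∈ Ω. -/

import Mathlib

/-!
Write `s = ‖a‖²`, `p = aᵀg` and `q = aᵀBa > 0`. The substitution `x = τ / (1 - τ s)` turns `ρ`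
into the convex quadratic `p x + q x² / 2`, with vertex `x = -p/q`. The Möbius map
`τ ↦ τ / (1 - τ s)` is increasing on each side of its pole `1/s`, with values above `-1/s` on the
left and below `-1/s` on the right. Since `a_τ = q - s p < 0`, the vertex lies below `-1/s` and is
the image of `τ_cp = p / (s p - q) > 1/s`. Hence `ρ` increases on the left piece of `Ω`, and on the
right piece decreases up to `τ_cp` and increases after it; in each case `τ*` is the point of `Ω`
whose image is closest to the vertex.
-/

open Set
open scoped RealInnerProductSpace

lemma Matrix.PosDef.inner_toEuclideanLin_self_pos {ι : Type*} [Fintype ι] [DecidableEq ι]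
    {B : Matrix ι ι ℝ} (hB : B.PosDef) {x : EuclideanSpace ℝ ι} (hx : x ≠ 0) :
    0 < ⟪x, B.toEuclideanLin x⟫ := by
  rw [EuclideanSpace.inner_eq_star_dotProduct, Matrix.ofLp_toLpLin, Matrix.toLin'_apply,
    dotProduct_comm]
  exact hB.dotProduct_mulVec_pos (by simpa using hx)

lemma quadratic_le_of_abs_add_div_le {p q x y : ℝ} (hq : 0 < q) (h : |x + p / q| ≤ |y + p / q|) :
    p * x + q * x ^ 2 / 2 ≤ p * y + q * y ^ 2 / 2 := by
  have vertex_form (z : ℝ) :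
      p * z + q * z ^ 2 / 2 = q / 2 * (z + p / q) ^ 2 - p ^ 2 / (2 * q) := by
    field_simp
    ring
  rw [vertex_form, vertex_form]
  have hsq := sq_le_sq.mpr h
  gcongr

section Mobius

variable {s : ℝ}

lemma div_one_sub_mul_le_div_one_sub_mul {t₁ t₂ : ℝ} (h : t₁ ≤ t₂)
    (hpos : 0 < (1 - t₁ * s) * (1 - t₂ * s)) : t₁ / (1 - t₁ * s) ≤ t₂ / (1 - t₂ * s) := by
  obtain ⟨h₁, h₂⟩ := mul_ne_zero_iff.mp hpos.ne'
  rw [← sub_nonneg, div_sub_div _ _ h₂ h₁]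
  exact div_nonneg (by linear_combination h) (mul_comm (1 - t₁ * s) _ ▸ hpos.le)

lemma monotoneOn_div_one_sub_mul_Iio (hs : 0 < s) :
    MonotoneOn (fun t ↦ t / (1 - t * s)) (Iio s⁻¹) := by
  intro t₁ ht₁ t₂ ht₂ h
  rw [mem_Iio, ← one_div, lt_div_iff₀ hs] at ht₁ ht₂
  exact div_one_sub_mul_le_div_one_sub_mul h (mul_pos (by linarith) (by linarith))

lemma monotoneOn_div_one_sub_mul_Ioi (hs : 0 < s) :
    MonotoneOn (fun t ↦ t / (1 - t * s)) (Ioi s⁻¹) := by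
  intro t₁ ht₁ t₂ ht₂ h
  rw [mem_Ioi, inv_lt_iff_one_lt_mul₀ hs] at ht₁ ht₂
  exact div_one_sub_mul_le_div_one_sub_mul h (mul_pos_of_neg_of_neg (by linarith) (by linarith))

lemma neg_inv_lt_div_one_sub_mul (hs : 0 < s) {t : ℝ} (ht : t < s⁻¹) :
    -s⁻¹ < t / (1 - t * s) := by
  rw [← one_div, lt_div_iff₀ hs] at ht
  rw [lt_div_iff₀ (by linarith)]
  field_simp
  linarith

lemma div_one_sub_mul_lt_neg_inv (hs : 0 < s) {t : ℝ} (ht : s⁻¹ < t) :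
    t / (1 - t * s) < -s⁻¹ := by
  rw [inv_lt_iff_one_lt_mul₀ hs] at ht
  rw [div_lt_iff_of_neg (by linarith)]
  field_simp
  linarith

end Mobius

/-- `ρ` in the scalars `s = ‖a‖²`, `p = aᵀg`, `q = aᵀBa` (see `scalarRho_eq`). -/
noncomputable def scalarRho (s p q τ : ℝ) : ℝ :=
  p * (τ / (1 - τ * s)) + q * (τ / (1 - τ * s)) ^ 2 / 2

lemma scalarRho_eq (s p q τ : ℝ) :
    scalarRho s p q τ = τ * p / (1 - τ * s) + τ ^ 2 * q / (2 * (1 - τ * s) ^ 2) := by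
  rw [scalarRho]
  generalize 1 - τ * s = d
  ring

section Critical

variable {s p q : ℝ}

lemma inv_lt_div_mul_sub (hs : 0 < s) (hq : 0 < q) (hqp : q < s * p) : s⁻¹ < p / (s * p - q) := by
  rw [inv_lt_iff_one_lt_mul₀ hs, div_mul_eq_mul_div, one_lt_div (by linarith)]
  linarith

lemma div_mul_sub_div_one_sub_mul (hqp : s * p - q ≠ 0) :
    p / (s * p - q) / (1 - p / (s * p - q) * s) = -(p / q) := by
  have : 1 - p / (s * p - q) * s = -q / (s * p - q) := by
    rw [eq_div_iff hqp, sub_mul, div_mul_eq_mul_div, div_mul_cancel₀ _ hqp]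
    ring
  rw [this, div_div_div_cancel_right₀ hqp, div_neg]

lemma neg_div_lt_neg_inv (hs : 0 < s) (hq : 0 < q) (hqp : q < s * p) : -(p / q) < -s⁻¹ := by
  rw [neg_lt_neg_iff, inv_lt_iff_one_lt_mul₀ hs, div_mul_eq_mul_div, one_lt_div hq, mul_comm]
  exact hqp

lemma scalarRho_crit_le (hq : 0 < q) (hqp : q < s * p) (τ : ℝ) :
    scalarRho s p q (p / (s * p - q)) ≤ scalarRho s p q τ := by
  unfold scalarRho
  rw [div_mul_sub_div_one_sub_mul (sub_ne_zero.mpr hqp.ne')]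
  apply quadratic_le_of_abs_add_div_le hq
  simp

lemma monotoneOn_scalarRho_Iio (hs : 0 < s) (hq : 0 < q) (hqp : q < s * p) :
    MonotoneOn (scalarRho s p q) (Iio s⁻¹) := by
  intro t₁ ht₁ t₂ ht₂ h
  have vertex_le : -(p / q) ≤ t₁ / (1 - t₁ * s) :=
    (neg_div_lt_neg_inv hs hq hqp).trans (neg_inv_lt_div_one_sub_mul hs ht₁) |>.le
  apply quadratic_le_of_abs_add_div_le hq
  exact abs_le_abs_of_nonneg (by linarith)
    (add_le_add_left (monotoneOn_div_one_sub_mul_Iio hs ht₁ ht₂ h) _)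

lemma antitoneOn_scalarRho_Ioc (hs : 0 < s) (hq : 0 < q) (hqp : q < s * p) :
    AntitoneOn (scalarRho s p q) (Ioc s⁻¹ (p / (s * p - q))) := by
  intro t₁ ht₁ t₂ ht₂ h
  have le_vertex : t₂ / (1 - t₂ * s) ≤ -(p / q) := by
    rw [← div_mul_sub_div_one_sub_mul (sub_ne_zero.mpr hqp.ne')]
    exact monotoneOn_div_one_sub_mul_Ioi hs ht₂.1 (inv_lt_div_mul_sub hs hq hqp) ht₂.2
  apply quadratic_le_of_abs_add_div_le hq
  exact abs_le_abs_of_nonpos (by linarith)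
    (add_le_add_left (monotoneOn_div_one_sub_mul_Ioi hs ht₁.1 ht₂.1 h) _)

lemma vertex_le_of_crit_le (hs : 0 < s) (hq : 0 < q) (hqp : q < s * p) {t : ℝ}
    (ht : p / (s * p - q) ≤ t) : -(p / q) ≤ t / (1 - t * s) := by
  have hcrit := inv_lt_div_mul_sub hs hq hqp
  rw [← div_mul_sub_div_one_sub_mul (sub_ne_zero.mpr hqp.ne')]
  exact monotoneOn_div_one_sub_mul_Ioi hs hcrit (hcrit.trans_le ht) ht

lemma monotoneOn_scalarRho_Ici (hs : 0 < s) (hq : 0 < q) (hqp : q < s * p) :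
    MonotoneOn (scalarRho s p q) (Ici (p / (s * p - q))) := by
  intro t₁ ht₁ t₂ ht₂ h
  have hcrit := inv_lt_div_mul_sub hs hq hqp
  apply quadratic_le_of_abs_add_div_le hq
  exact abs_le_abs_of_nonneg (by linarith [vertex_le_of_crit_le hs hq hqp ht₁])
    (add_le_add_left
      (monotoneOn_div_one_sub_mul_Ioi hs (hcrit.trans_le ht₁) (hcrit.trans_le ht₂) h) _)

lemma scalarRho_le_of_crit_le_of_lt_inv (hs : 0 < s) (hq : 0 < q) (hqp : q < s * p) {t τ : ℝ}
    (ht : p / (s * p - q) ≤ t) (hτ : τ < s⁻¹) : scalarRho s p q t ≤ scalarRho s p q τ := by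
  have hcrit := inv_lt_div_mul_sub hs hq hqp
  apply quadratic_le_of_abs_add_div_le hq
  exact abs_le_abs_of_nonneg (by linarith [vertex_le_of_crit_le hs hq hqp ht])
    (add_le_add_left ((div_one_sub_mul_lt_neg_inv hs (hcrit.trans_le ht)).trans
      (neg_inv_lt_div_one_sub_mul hs hτ)).le _)

end Critical

theorem isMinOn_Icc_union_Icc_of_eqOn_scalarRho {s p q τΔ τd τu τstar : ℝ} {ρ : ℝ → ℝ}
    (hs : 0 < s) (hq : 0 < q) (hqp : q < s * p)
    (hρ : EqOn ρ (scalarRho s p q) (Icc (-τΔ) τd ∪ Icc τu τΔ))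
    (hτd : τd < s⁻¹) (hτu : s⁻¹ < τu) (hτuΔ : τu ≤ τΔ) (hτΔd : -τΔ ≤ τd)
    (h₁ : p / (s * p - q) ≤ τu → τstar = τu)
    (h₂ : τu < p / (s * p - q) → p / (s * p - q) < τΔ → τstar = p / (s * p - q))
    (h₃ : τΔ ≤ p / (s * p - q) → (τstar = -τΔ ∨ τstar = τΔ) ∧ ρ τstar = min (ρ (-τΔ)) (ρ τΔ)) :
    τstar ∈ Icc (-τΔ) τd ∪ Icc τu τΔ ∧ IsMinOn ρ (Icc (-τΔ) τd ∪ Icc τu τΔ) τstar := by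
  set c := p / (s * p - q)
  have hτuΩ : τu ∈ Icc (-τΔ) τd ∪ Icc τu τΔ := Or.inr ⟨le_rfl, hτuΔ⟩
  rcases le_or_gt c τu with hcu | hcu
  · rw [h₁ hcu]
    refine ⟨hτuΩ, isMinOn_iff.mpr fun τ hτ ↦ ?_⟩
    rw [hρ hτuΩ, hρ hτ]
    rcases hτ with hτ | hτ
    · exact scalarRho_le_of_crit_le_of_lt_inv hs hq hqp hcu (hτ.2.trans_lt hτd)
    · exact monotoneOn_scalarRho_Ici hs hq hqp hcu (hcu.trans hτ.1) hτ.1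
  rcases lt_or_ge c τΔ with hcΔ | hcΔ
  · have hcΩ : c ∈ Icc (-τΔ) τd ∪ Icc τu τΔ := Or.inr ⟨hcu.le, hcΔ.le⟩
    rw [h₂ hcu hcΔ]
    refine ⟨hcΩ, isMinOn_iff.mpr fun τ hτ ↦ ?_⟩
    rw [hρ hcΩ, hρ hτ]
    exact scalarRho_crit_le hq hqp τ
  obtain ⟨hmem, hmin⟩ := h₃ hcΔ
  have hlΩ : -τΔ ∈ Icc (-τΔ) τd ∪ Icc τu τΔ := Or.inl ⟨le_rfl, hτΔd⟩
  have hrΩ : τΔ ∈ Icc (-τΔ) τd ∪ Icc τu τΔ := Or.inr ⟨hτuΔ, le_rfl⟩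
  refine ⟨hmem.elim (· ▸ hlΩ) (· ▸ hrΩ), isMinOn_iff.mpr fun τ hτ ↦ ?_⟩
  rcases hτ with hτ | hτ
  · calc ρ τstar ≤ ρ (-τΔ) := hmin.trans_le (min_le_left _ _)
      _ ≤ ρ τ := by
        rw [hρ hlΩ, hρ (Or.inl hτ)]
        exact monotoneOn_scalarRho_Iio hs hq hqp (hτΔd.trans_lt hτd) (hτ.2.trans_lt hτd) hτ.1
  · calc ρ τstar ≤ ρ τΔ := hmin.trans_le (min_le_right _ _)
      _ ≤ ρ τ := by
        rw [hρ hrΩ, hρ (Or.inr hτ)]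
        exact antitoneOn_scalarRho_Ioc hs hq hqp ⟨hτu.trans_le hτ.1, hτ.2.trans hcΔ⟩
          ⟨hτu.trans_le hτuΔ, hcΔ⟩ hτ.2

theorem stmt_6 {{n : ℕ}} (hn : 1 ≤ n)
    (a g : EuclideanSpace ℝ (Fin n)) (ha : a ≠ 0)
    (B : Matrix (Fin n) (Fin n) ℝ) (hBs : B.IsSymm) (hBpd : B.PosDef)
    (ρ : ℝ → ℝ)
    (hρ : ∀ τ : ℝ, τ ≠ 1 / ‖a‖ ^ 2 →
      ρ τ = τ * ⟪a, g⟫ / (1 - τ * ‖a‖ ^ 2)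
        + τ ^ 2 * ⟪a, Matrix.toEuclideanLin B a⟫ / (2 * (1 - τ * ‖a‖ ^ 2) ^ 2))
    (aτ τm : ℝ)
    (haτ : aτ = ⟪a, Matrix.toEuclideanLin B a⟫ - ‖a‖ ^ 2 * ⟪a, g⟫)
    (hτm : τm = 1 / ‖a‖ ^ 2)
    (τcp : ℝ) (hτcp : aτ ≠ 0 → τcp = -⟪a, g⟫ / aτ)
    (Δ ε₀ : ℝ) (hΔ : 0 < Δ) (hε₀ : 0 < ε₀) (hε₁ : ε₀ < 1)
    (τΔ τd τu : ℝ) (hτΔ : τΔ = Δ / ‖a‖) (hτd : τd = (1 - ε₀) / ‖a‖ ^ 2)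
    (hτu : τu = (1 + ε₀) / ‖a‖ ^ 2)
    (hcase : 1 + ε₀ ≤ Δ * ‖a‖) (haτneg : aτ < 0)
    (τstar : ℝ)
    (hτs1 : τm < τcp → τcp ≤ τu → τstar = τu)
    (hτs2 : τu < τcp → τcp < τΔ → τstar = τcp)
    (hτs3 : τΔ ≤ τcp → (τstar = -τΔ ∨ τstar = τΔ) ∧ ρ τstar = min (ρ (-τΔ)) (ρ τΔ)) :
    0 < ⟪a, g⟫ ∧ τm < τcp ∧
      τstar ∈ Set.Icc (-τΔ) τd ∪ Set.Icc τu τΔ ∧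
      ∀ τ ∈ Set.Icc (-τΔ) τd ∪ Set.Icc τu τΔ, ρ τstar ≤ ρ τ := by
  have hna : 0 < ‖a‖ := norm_pos_iff.mpr ha
  set s := ‖a‖ ^ 2
  have hs : 0 < s := by positivity
  have hq := hBpd.inner_toEuclideanLin_self_pos ha
  have hqp : ⟪a, B.toEuclideanLin a⟫ < s * ⟪a, g⟫ := by linarith
  have hcp : τcp = ⟪a, g⟫ / (s * ⟪a, g⟫ - ⟪a, B.toEuclideanLin a⟫) := by
    rw [hτcp haτneg.ne, haτ, ← neg_div_neg_eq, neg_neg, neg_sub]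
  subst hcp hτm
  rw [one_div] at hρ hτs1 ⊢
  have hτd' : τd < s⁻¹ := by rw [hτd, ← one_div]; gcongr; linarith
  have hτu' : s⁻¹ < τu := by rw [hτu, ← one_div]; gcongr; linarith
  have hτuΔ : τu ≤ τΔ := by
    rw [hτu, hτΔ, div_le_div_iff₀ hs hna]
    nlinarith
  have hτΔd : -τΔ ≤ τd := by
    have : -τu ≤ τd := by rw [hτu, hτd, ← neg_div]; gcongr; linarith
    linarith
  have hρ' : EqOn ρ (scalarRho s ⟪a, g⟫ ⟪a, B.toEuclideanLin a⟫) (Icc (-τΔ) τd ∪ Icc τu τΔ) :=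
    fun τ hτ ↦ by
      rw [scalarRho_eq, hρ τ (hτ.elim (fun h ↦ (h.2.trans_lt hτd').ne)
        (fun h ↦ (hτu'.trans_le h.1).ne'))]
  have hcrit := inv_lt_div_mul_sub hs hq hqp
  obtain ⟨hmem, hmin⟩ := isMinOn_Icc_union_Icc_of_eqOn_scalarRho hs hq hqp hρ' hτd' hτu' hτuΔ
    hτΔd (hτs1 hcrit) hτs2 hτs3
  exact ⟨pos_of_mul_pos_right (hq.trans hqp) hs.le, hcrit, hmem, isMinOn_iff.mp hmin⟩
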